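/- arXiv:2207.03865 — 6 statements merged into one kernel-verified Lean document; each statement's English description precedes it below -/
import Mathlib

section
/- Let R : V → H be a surjective bounded linear operator between real Hilbert spaces, B : V → V a bounded self-adjoint coercive operator that is bijective with bounded inverse B⁻¹, and D : H → V a bounded linear map satisfying R(D y) = y for all y ∈ H and (B(D y), k)_V = 0 for all y ∈ H and all k ∈ ker R. Then the bounded operator R ∘ B⁻¹ ∘ R* : H → H is a two-sided inverse of D* ∘ B ∘ D : H → H, i.e. (R B⁻¹ R*) ∘ (D* B D) = Id_H and (D* B D) ∘ (R B⁻¹ R*) = Id_H. -/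
open RealInnerProductSpace

/-!
Since `R D = id`, the operator `D R` is a projection with kernel `ker R`, so `R* D* = (D R)*`
fixes every vector orthogonal to `ker R`; in particular it fixes `B D u`, which gives
`R B⁻¹ R* D* B D u = R B⁻¹ B D u = R D u = u`. Conversely, self-adjointness of `B` turns the
`B`-orthogonality of `range D` to `ker R` into `D* B k = 0` for `k ∈ ker R`, so
`D* B D R x = D* B x`; with `x = B⁻¹ R* u` this is `D* R* u = (R D)* u = u`.
-/

namespace ContinuousLinearMap

variable {V H : Type*} [NormedAddCommGroup V] [InnerProductSpace ℝ V]
  [NormedAddCommGroup H] [InnerProductSpace ℝ H] {R : V →L[ℝ] H} {D : H →L[ℝ] V}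

theorem map_apply_sub_mem_ker_of_rightInverse (hD1 : ∀ y : H, R (D y) = y) (x : V) :
    D (R x) - x ∈ LinearMap.ker (R : V →ₗ[ℝ] H) := by
  simp [LinearMap.mem_ker, hD1]

variable [CompleteSpace V] [CompleteSpace H]

theorem adjoint_apply_adjoint_apply_of_rightInverse (hD1 : ∀ y : H, R (D y) = y) (u : H) :
    adjoint D (adjoint R u) = u :=
  ext_inner_right ℝ fun y => by rw [adjoint_inner_left, adjoint_inner_left, hD1]

theorem adjoint_apply_adjoint_apply_of_orthogonal_ker (hD1 : ∀ y : H, R (D y) = y) {v : V}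
    (hv : ∀ k ∈ LinearMap.ker (R : V →ₗ[ℝ] H), ⟪v, k⟫ = 0) :
    adjoint R (adjoint D v) = v := by
  refine ext_inner_right ℝ fun x => ?_
  rw [adjoint_inner_left, adjoint_inner_left, ← sub_eq_zero, ← inner_sub_right,
    hv _ (map_apply_sub_mem_ker_of_rightInverse hD1 x)]

theorem adjoint_apply_map_eq_zero_of_mem_ker {B : V →L[ℝ] V}
    (hBsa : ∀ x z : V, ⟪B x, z⟫ = ⟪x, B z⟫)
    (hD2 : ∀ y : H, ∀ k ∈ LinearMap.ker (R : V →ₗ[ℝ] H), ⟪B (D y), k⟫ = 0)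
    {k : V} (hk : k ∈ LinearMap.ker (R : V →ₗ[ℝ] H)) :
    adjoint D (B k) = 0 :=
  ext_inner_right ℝ fun y => by
    rw [adjoint_inner_left, hBsa, real_inner_comm, hD2 y k hk, inner_zero_left]

theorem adjoint_apply_map_apply_rightInverse {B : V →L[ℝ] V}
    (hBsa : ∀ x z : V, ⟪B x, z⟫ = ⟪x, B z⟫) (hD1 : ∀ y : H, R (D y) = y)
    (hD2 : ∀ y : H, ∀ k ∈ LinearMap.ker (R : V →ₗ[ℝ] H), ⟪B (D y), k⟫ = 0) (x : V) :
    adjoint D (B (D (R x))) = adjoint D (B x) := by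
  rw [← sub_eq_zero, ← map_sub, ← map_sub, adjoint_apply_map_eq_zero_of_mem_ker hBsa hD2
    (map_apply_sub_mem_ker_of_rightInverse hD1 x)]

end ContinuousLinearMap

theorem statement4_general
    {V H : Type*} [NormedAddCommGroup V] [InnerProductSpace ℝ V] [CompleteSpace V]
    [NormedAddCommGroup H] [InnerProductSpace ℝ H] [CompleteSpace H]
    (R : V →L[ℝ] H)
    (B : V →L[ℝ] V)
    (hBsa : ∀ x z : V, ⟪B x, z⟫ = ⟪x, B z⟫)
    (B' : V →L[ℝ] V) (hB'l : ∀ x : V, B' (B x) = x) (hB'r : ∀ x : V, B (B' x) = x)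
    (D : H →L[ℝ] V)
    (hD1 : ∀ y : H, R (D y) = y)
    (hD2 : ∀ y : H, ∀ k ∈ LinearMap.ker (R : V →ₗ[ℝ] H), ⟪B (D y), k⟫ = 0) :
    (∀ u : H, R (B' (ContinuousLinearMap.adjoint R
        (ContinuousLinearMap.adjoint D (B (D u))))) = u) ∧
    (∀ u : H, ContinuousLinearMap.adjoint D
        (B (D (R (B' (ContinuousLinearMap.adjoint R u))))) = u) := by
  refine ⟨fun u => ?_, fun u => ?_⟩
  · rw [ContinuousLinearMap.adjoint_apply_adjoint_apply_of_orthogonal_ker hD1 (hD2 u), hB'l, hD1]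
  · rw [ContinuousLinearMap.adjoint_apply_map_apply_rightInverse hBsa hD1 hD2, hB'r,
      ContinuousLinearMap.adjoint_apply_adjoint_apply_of_rightInverse hD1]

/-- Let `R : V → H` be a surjective bounded linear operator between real
Hilbert spaces, `B : V → V` a bounded self-adjoint coercive operator with bounded inverse
`B'`, and `D : H → V` the `B`-weighted pseudoinverse of `R` (a bounded linear right
inverse of `R` whose values are `B`-orthogonal to `ker R`). Then `R ∘ B' ∘ R*` is a
two-sided inverse of `D* ∘ B ∘ D` on `H`. -/
theorem statement4
    {V H : Type*} [NormedAddCommGroup V] [InnerProductSpace ℝ V] [CompleteSpace V]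
    [NormedAddCommGroup H] [InnerProductSpace ℝ H] [CompleteSpace H]
    (R : V →L[ℝ] H) (hR : Function.Surjective R)
    (B : V →L[ℝ] V)
    (hBsa : ∀ x z : V, ⟪B x, z⟫ = ⟪x, B z⟫)
    (c : ℝ) (hc : 0 < c) (hBcoer : ∀ x : V, c * ‖x‖ ^ 2 ≤ ⟪B x, x⟫)
    (B' : V →L[ℝ] V) (hB'l : ∀ x : V, B' (B x) = x) (hB'r : ∀ x : V, B (B' x) = x)
    (D : H →L[ℝ] V)
    (hD1 : ∀ y : H, R (D y) = y)
    (hD2 : ∀ y : H, ∀ k ∈ LinearMap.ker (R : V →ₗ[ℝ] H), ⟪B (D y), k⟫ = 0) :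
    (∀ u : H, R (B' (ContinuousLinearMap.adjoint R
        (ContinuousLinearMap.adjoint D (B (D u))))) = u) ∧
    (∀ u : H, ContinuousLinearMap.adjoint D
        (B (D (R (B' (ContinuousLinearMap.adjoint R u))))) = u) :=
  statement4_general R B hBsa B' hB'l hB'r D hD1 hD2
end

section
/- Let H be a real Hilbert space, let α, β : H → H be two bounded self-adjoint coercive operators (so (x,y)_α := (α x, y)_H and (x,y)_β := (β x, y)_H are inner products with norms equivalent to ‖·‖_H), and let T : H → H be a bounded operator that is self-adjoint with respect to both (·,·)_α and (·,·)_β. Then for any constants c₋, c₊ > 0: if c₋ (x,x)_β ≤ (T x, x)_β ≤ c₊ (x,x)_β for all x ∈ H, then also c₋ (x,x)_α ≤ (T x, x)_α ≤ c₊ (x,x)_α for all x ∈ H. -/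
open RealInnerProductSpace

/-!
Write `Q_α x = ⟪α x, x⟫`, put `m = (c₋ + c₊) / 2`, `r = (c₊ - c₋) / 2` and `A = T - m`. The Rayleigh
bounds for `T` say exactly `|⟪α (A x), x⟫| ≤ r Q_α x`, and for an operator that is self-adjoint for
`(·,·)_α` this is equivalent to `Q_α (A x) ≤ r² Q_α x`: polarization gives one direction and
Cauchy–Schwarz the other. So it suffices to move the bound `Q (A x) ≤ r² Q x` from `β` to `α`.
Iterating it under `β` gives `Q_β (Aⁿ x) ≤ r²ⁿ Q_β x`. Since the two forms are equivalent, this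
becomes `Q_α (Aⁿ x) ≤ C r²ⁿ Q_α x`, which bounds the spectral radius. Because `A` is self-adjoint for
`(·,·)_α`, Cauchy–Schwarz iterated `n` times gives
`Q_α (A x) ^ N ≤ Q_α (A^N x) Q_α x ^ (N - 1) ≤ C (r² Q_α x) ^ N` for `N = 2ⁿ`.
Taking `N`-th roots and letting `N → ∞` removes `C`.
-/

theorem abs_sub_midpoint_mul_le_iff {a q cm cp : ℝ} :
    |a - (cm + cp) / 2 * q| ≤ (cp - cm) / 2 * q ↔ cm * q ≤ a ∧ a ≤ cp * q := by
  rw [abs_le]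
  constructor <;> rintro ⟨h₁, h₂⟩ <;> constructor <;> linarith

theorem le_of_forall_pow_two_pow_le_mul_pow {a b C : ℝ} (hb : 0 ≤ b)
    (h : ∀ n : ℕ, a ^ 2 ^ n ≤ C * b ^ 2 ^ n) : a ≤ b := by
  by_contra! hba
  obtain rfl | hb := hb.eq_or_lt
  · exact hba.not_ge (by simpa using h 0)
  have hq : 1 < a / b := (one_lt_div hb).2 hba
  obtain ⟨n, hn⟩ := ((tendsto_pow_atTop_atTop_of_one_lt hq).eventually_gt_atTop C).exists
  have hqC : (a / b) ^ 2 ^ n ≤ C := by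
    rw [div_pow, div_le_iff₀ (by positivity)]
    exact h n
  exact hn.not_ge ((pow_le_pow_right₀ hq.le n.lt_two_pow_self.le).trans hqC)

section

variable {H : Type*} [NormedAddCommGroup H] [InnerProductSpace ℝ H] {α β A : H →L[ℝ] H}

theorem real_inner_map_sq_le_mul (hα_symm : ∀ x z : H, ⟪α x, z⟫ = ⟪x, α z⟫)
    (hα_nonneg : ∀ x, 0 ≤ ⟪α x, x⟫) (x y : H) :
    ⟪α x, y⟫ ^ 2 ≤ ⟪α x, x⟫ * ⟪α y, y⟫ :=
  (LinearMap.BilinForm.compLeft (innerₗ H) (α : H →ₗ[ℝ] H)).apply_sq_le_of_symm hα_nonneg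
    ⟨fun x y => (hα_symm x y).trans (real_inner_comm _ _)⟩ x y

theorem real_inner_map_self_le_div_mul {cβ : ℝ} (hcβ : 0 < cβ)
    (hβ_coer : ∀ x : H, cβ * ‖x‖ ^ 2 ≤ ⟪β x, x⟫) (α : H →L[ℝ] H) (x : H) :
    ⟪α x, x⟫ ≤ ‖α‖ / cβ * ⟪β x, x⟫ :=
  calc ⟪α x, x⟫ ≤ ‖α x‖ * ‖x‖ := real_inner_le_norm _ _
    _ ≤ ‖α‖ * ‖x‖ * ‖x‖ := mul_le_mul_of_nonneg_right (α.le_opNorm x) (norm_nonneg x)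
    _ = ‖α‖ / cβ * (cβ * ‖x‖ ^ 2) := by field_simp
    _ ≤ ‖α‖ / cβ * ⟪β x, x⟫ := mul_le_mul_of_nonneg_left (hβ_coer x) (by positivity)

theorem real_inner_map_pow_apply_self_le {s : ℝ} (hs : 0 ≤ s)
    (h : ∀ x, ⟪β (A x), A x⟫ ≤ s * ⟪β x, x⟫) (n : ℕ) (x : H) :
    ⟪β ((A ^ n) x), (A ^ n) x⟫ ≤ s ^ n * ⟪β x, x⟫ := by
  induction n generalizing x with
  | zero => simp
  | succ n ih =>
    rw [pow_succ A, mul_apply_eq_comp]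
    calc _ ≤ s ^ n * ⟪β (A x), A x⟫ := ih (A x)
      _ ≤ s ^ n * (s * ⟪β x, x⟫) := mul_le_mul_of_nonneg_left (h x) (pow_nonneg hs n)
      _ = s ^ (n + 1) * ⟪β x, x⟫ := by ring

theorem abs_real_inner_map_apply_le (hα_symm : ∀ x z : H, ⟪α x, z⟫ = ⟪x, α z⟫)
    (hα_nonneg : ∀ x, 0 ≤ ⟪α x, x⟫) {r : ℝ} (hr : 0 ≤ r) {x : H}
    (h : ⟪α (A x), A x⟫ ≤ r ^ 2 * ⟪α x, x⟫) :
    |⟪α (A x), x⟫| ≤ r * ⟪α x, x⟫ := by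
  refine abs_le_of_sq_le_sq ?_ (mul_nonneg hr (hα_nonneg x))
  calc ⟪α (A x), x⟫ ^ 2 ≤ ⟪α (A x), A x⟫ * ⟪α x, x⟫ := real_inner_map_sq_le_mul hα_symm hα_nonneg _ _
    _ ≤ r ^ 2 * ⟪α x, x⟫ * ⟪α x, x⟫ := mul_le_mul_of_nonneg_right h (hα_nonneg x)
    _ = (r * ⟪α x, x⟫) ^ 2 := by ring

theorem real_inner_map_sub_smul_one_apply (α T : H →L[ℝ] H) (m : ℝ) (x : H) :
    ⟪α ((T - m • 1) x), x⟫ = ⟪α (T x), x⟫ - m * ⟪α x, x⟫ := by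
  simp only [sub_apply, smul_apply,
    one_apply_eq_self, map_sub, map_smul, inner_sub_left, real_inner_smul_left]

def IsSelfAdjointWRT (α A : H →L[ℝ] H) : Prop :=
  ∀ x z : H, ⟪α (A x), z⟫ = ⟪α x, A z⟫

namespace IsSelfAdjointWRT

theorem pow (hA : IsSelfAdjointWRT α A) (k : ℕ) : IsSelfAdjointWRT α (A ^ k) := by
  induction k with
  | zero => intro x z; simp
  | succ k ih =>
    intro x z
    calc ⟪α ((A ^ (k + 1)) x), z⟫ = ⟪α ((A ^ k) (A x)), z⟫ := by rw [pow_succ, mul_apply_eq_comp]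
      _ = ⟪α x, A ((A ^ k) z)⟫ := by rw [ih, hA]
      _ = ⟪α x, (A ^ (k + 1)) z⟫ := by rw [pow_succ', mul_apply_eq_comp]

theorem sub_smul_one (hA : IsSelfAdjointWRT α A) (m : ℝ) : IsSelfAdjointWRT α (A - m • 1) := by
  intro x z
  simp only [sub_apply, smul_apply,
    one_apply_eq_self, map_sub, map_smul, inner_sub_left, inner_sub_right,
    real_inner_smul_left, real_inner_smul_right, hA x z]

/-- For a self-adjoint operator the operator norm is bounded by the numerical radius. -/
theorem real_inner_map_apply_self_le_sq_mul (hA : IsSelfAdjointWRT β A)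
    (hβ_symm : ∀ x z : H, ⟪β x, z⟫ = ⟪x, β z⟫) {r : ℝ} (hr : 0 ≤ r)
    (h : ∀ x, |⟪β (A x), x⟫| ≤ r * ⟪β x, x⟫) (x : H) :
    ⟪β (A x), A x⟫ ≤ r ^ 2 * ⟪β x, x⟫ := by
  have polarization : ∀ y, 2 * ⟪β (A x), y⟫ ≤ r * (⟪β x, x⟫ + ⟪β y, y⟫) := by
    intro y
    have hyx : ⟪β (A y), x⟫ = ⟪β (A x), y⟫ := by rw [hA, hβ_symm, real_inner_comm]
    have h₁ := (abs_le.1 (h (x + y))).2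
    have h₂ := (abs_le.1 (h (x - y))).1
    simp only [map_add, map_sub, inner_add_left, inner_add_right, inner_sub_left,
      inner_sub_right] at h₁ h₂
    linarith
  obtain rfl | hr := hr.eq_or_lt
  · have := polarization (A x)
    simp only [zero_mul] at this ⊢
    linarith
  · have key := mul_le_mul_of_nonneg_left (polarization (r⁻¹ • A x)) hr.le
    simp only [map_smul, real_inner_smul_left, real_inner_smul_right] at key
    field_simp at key
    linarith

theorem real_inner_map_apply_self_pow_two_pow_le (hA : IsSelfAdjointWRT α A)
    (hα_symm : ∀ x z : H, ⟪α x, z⟫ = ⟪x, α z⟫) (hα_nonneg : ∀ x, 0 ≤ ⟪α x, x⟫) (x : H) (n : ℕ) :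
    ⟪α (A x), A x⟫ ^ 2 ^ n ≤ ⟪α ((A ^ 2 ^ n) x), (A ^ 2 ^ n) x⟫ * ⟪α x, x⟫ ^ (2 ^ n - 1) := by
  induction n with
  | zero => simp
  | succ n ih =>
    set N := 2 ^ n
    have hN : 1 ≤ N := Nat.one_le_two_pow
    have hsq : ⟪α ((A ^ N) x), (A ^ N) x⟫ ^ 2 ≤
        ⟪α ((A ^ (N + N)) x), (A ^ (N + N)) x⟫ * ⟪α x, x⟫ := by
      rw [← hA.pow N, ← mul_apply_eq_comp (A ^ N), ← pow_add]
      exact real_inner_map_sq_le_mul hα_symm hα_nonneg _ _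
    rw [show 2 ^ (n + 1) = N + N by rw [pow_succ, mul_two]]
    calc ⟪α (A x), A x⟫ ^ (N + N) = (⟪α (A x), A x⟫ ^ N) ^ 2 := by rw [← mul_two, pow_mul]
      _ ≤ (⟪α ((A ^ N) x), (A ^ N) x⟫ * ⟪α x, x⟫ ^ (N - 1)) ^ 2 :=
          pow_le_pow_left₀ (pow_nonneg (hα_nonneg _) _) ih 2
      _ = ⟪α ((A ^ N) x), (A ^ N) x⟫ ^ 2 * ⟪α x, x⟫ ^ ((N - 1) * 2) := by
          rw [mul_pow, ← pow_mul]
      _ ≤ ⟪α ((A ^ (N + N)) x), (A ^ (N + N)) x⟫ * ⟪α x, x⟫ * ⟪α x, x⟫ ^ ((N - 1) * 2) :=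
          mul_le_mul_of_nonneg_right hsq (pow_nonneg (hα_nonneg x) _)
      _ = ⟪α ((A ^ (N + N)) x), (A ^ (N + N)) x⟫ * ⟪α x, x⟫ ^ (N + N - 1) := by
          rw [mul_assoc, ← pow_succ']
          congr 2
          omega

theorem real_inner_map_apply_self_le_of_pow_le (hA : IsSelfAdjointWRT α A)
    (hα_symm : ∀ x z : H, ⟪α x, z⟫ = ⟪x, α z⟫) (hα_nonneg : ∀ x, 0 ≤ ⟪α x, x⟫) {s C : ℝ}
    (hs : 0 ≤ s) (hpow : ∀ (n : ℕ) (x : H), ⟪α ((A ^ n) x), (A ^ n) x⟫ ≤ C * s ^ n * ⟪α x, x⟫)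
    (x : H) : ⟪α (A x), A x⟫ ≤ s * ⟪α x, x⟫ := by
  refine le_of_forall_pow_two_pow_le_mul_pow (C := C) (mul_nonneg hs (hα_nonneg x)) fun n => ?_
  calc _ ≤ _ := hA.real_inner_map_apply_self_pow_two_pow_le hα_symm hα_nonneg x n
    _ ≤ C * s ^ 2 ^ n * ⟪α x, x⟫ * ⟪α x, x⟫ ^ (2 ^ n - 1) :=
        mul_le_mul_of_nonneg_right (hpow _ x) (pow_nonneg (hα_nonneg x) _)
    _ = C * (s * ⟪α x, x⟫) ^ 2 ^ n := by
        rw [mul_assoc, mul_pow_sub_one (by positivity), mul_assoc, mul_pow]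

theorem real_inner_map_apply_self_le_of_coercive (hA : IsSelfAdjointWRT α A)
    (hα_symm : ∀ x z : H, ⟪α x, z⟫ = ⟪x, α z⟫) {cα cβ : ℝ} (hcα : 0 < cα)
    (hα_coer : ∀ x : H, cα * ‖x‖ ^ 2 ≤ ⟪α x, x⟫) (hcβ : 0 < cβ)
    (hβ_coer : ∀ x : H, cβ * ‖x‖ ^ 2 ≤ ⟪β x, x⟫) {s : ℝ} (hs : 0 ≤ s)
    (hβA : ∀ x, ⟪β (A x), A x⟫ ≤ s * ⟪β x, x⟫) (x : H) :
    ⟪α (A x), A x⟫ ≤ s * ⟪α x, x⟫ := by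
  refine hA.real_inner_map_apply_self_le_of_pow_le hα_symm
    (fun y => (mul_nonneg hcα.le (sq_nonneg _)).trans (hα_coer y)) hs (C := ‖α‖ / cβ * (‖β‖ / cα))
    (fun n y => ?_) x
  have hsn : 0 ≤ s ^ n := pow_nonneg hs n
  calc ⟪α ((A ^ n) y), (A ^ n) y⟫ ≤ ‖α‖ / cβ * ⟪β ((A ^ n) y), (A ^ n) y⟫ :=
        real_inner_map_self_le_div_mul hcβ hβ_coer α _
    _ ≤ ‖α‖ / cβ * (s ^ n * ⟪β y, y⟫) := by
        gcongr
        exact real_inner_map_pow_apply_self_le hs hβA n y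
    _ ≤ ‖α‖ / cβ * (s ^ n * (‖β‖ / cα * ⟪α y, y⟫)) := by
        gcongr
        exact real_inner_map_self_le_div_mul hcα hα_coer β y
    _ = ‖α‖ / cβ * (‖β‖ / cα) * s ^ n * ⟪α y, y⟫ := by ring

end IsSelfAdjointWRT

end

theorem statement5_general
    {H : Type*} [NormedAddCommGroup H] [InnerProductSpace ℝ H]
    (α β T : H →L[ℝ] H)
    (hαsa : ∀ x z : H, ⟪α x, z⟫ = ⟪x, α z⟫)
    (hβsa : ∀ x z : H, ⟪β x, z⟫ = ⟪x, β z⟫)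
    (cα : ℝ) (hcα : 0 < cα) (hαcoer : ∀ x : H, cα * ‖x‖ ^ 2 ≤ ⟪α x, x⟫)
    (cβ : ℝ) (hcβ : 0 < cβ) (hβcoer : ∀ x : H, cβ * ‖x‖ ^ 2 ≤ ⟪β x, x⟫)
    (hTα : ∀ x z : H, ⟪α (T x), z⟫ = ⟪α x, T z⟫)
    (hTβ : ∀ x z : H, ⟪β (T x), z⟫ = ⟪β x, T z⟫)
    (cm cp : ℝ)
    (hβbound : ∀ x : H, cm * ⟪β x, x⟫ ≤ ⟪β (T x), x⟫ ∧ ⟪β (T x), x⟫ ≤ cp * ⟪β x, x⟫) :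
    ∀ x : H, cm * ⟪α x, x⟫ ≤ ⟪α (T x), x⟫ ∧ ⟪α (T x), x⟫ ≤ cp * ⟪α x, x⟫ := by
  intro x
  obtain rfl | hx := eq_or_ne x 0
  · simp
  have hcm_le_cp : cm ≤ cp := by
    have hβx : 0 < ⟪β x, x⟫ :=
      (mul_pos hcβ (pow_pos (norm_pos_iff.2 hx) 2)).trans_le (hβcoer x)
    exact le_of_mul_le_mul_right ((hβbound x).1.trans (hβbound x).2) hβx
  have hr : 0 ≤ (cp - cm) / 2 := by linarith
  set A := T - ((cm + cp) / 2) • (1 : H →L[ℝ] H)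
  have hβA : ∀ y, ⟪β (A y), A y⟫ ≤ ((cp - cm) / 2) ^ 2 * ⟪β y, y⟫ :=
    (IsSelfAdjointWRT.sub_smul_one hTβ _).real_inner_map_apply_self_le_sq_mul hβsa hr fun y => by
      rw [real_inner_map_sub_smul_one_apply, abs_sub_midpoint_mul_le_iff]
      exact hβbound y
  have hαA : ⟪α (A x), A x⟫ ≤ ((cp - cm) / 2) ^ 2 * ⟪α x, x⟫ :=
    (IsSelfAdjointWRT.sub_smul_one hTα _).real_inner_map_apply_self_le_of_coercive hαsa hcα
      hαcoer hcβ hβcoer (sq_nonneg _) hβA x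
  rw [← abs_sub_midpoint_mul_le_iff, ← real_inner_map_sub_smul_one_apply]
  exact abs_real_inner_map_apply_le hαsa
    (fun y => (mul_nonneg hcα.le (sq_nonneg _)).trans (hαcoer y)) hr hαA

/-- Let `H` be a real Hilbert space, `α, β : H → H` bounded self-adjoint
coercive operators, and `T : H → H` a bounded operator self-adjoint with respect to both
induced scalar products `(x,y)_α := ⟪α x, y⟫` and `(x,y)_β := ⟪β x, y⟫`. If the Rayleigh
quotient bounds `c₋ (x,x)_β ≤ (T x, x)_β ≤ c₊ (x,x)_β` hold for all `x`, then the same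
bounds hold with `β` replaced by `α`. -/
theorem statement5
    {H : Type*} [NormedAddCommGroup H] [InnerProductSpace ℝ H] [CompleteSpace H]
    (α β T : H →L[ℝ] H)
    (hαsa : ∀ x z : H, ⟪α x, z⟫ = ⟪x, α z⟫)
    (hβsa : ∀ x z : H, ⟪β x, z⟫ = ⟪x, β z⟫)
    (cα : ℝ) (hcα : 0 < cα) (hαcoer : ∀ x : H, cα * ‖x‖ ^ 2 ≤ ⟪α x, x⟫)
    (cβ : ℝ) (hcβ : 0 < cβ) (hβcoer : ∀ x : H, cβ * ‖x‖ ^ 2 ≤ ⟪β x, x⟫)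
    (hTα : ∀ x z : H, ⟪α (T x), z⟫ = ⟪α x, T z⟫)
    (hTβ : ∀ x z : H, ⟪β (T x), z⟫ = ⟪β x, T z⟫)
    (cm cp : ℝ) (hcm : 0 < cm) (hcp : 0 < cp)
    (hβbound : ∀ x : H, cm * ⟪β x, x⟫ ≤ ⟪β (T x), x⟫ ∧ ⟪β (T x), x⟫ ≤ cp * ⟪β x, x⟫) :
    ∀ x : H, cm * ⟪α x, x⟫ ≤ ⟪α (T x), x⟫ ∧ ⟪α (T x), x⟫ ≤ cp * ⟪α x, x⟫ :=
  statement5_general α β T hαsa hβsa cα hcα hαcoer cβ hcβ hβcoer hTα hTβ cm cp hβbound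
end

section
/- Let R : V → H be a surjective bounded linear operator between real Hilbert spaces, A : H → H and B : V → V bounded self-adjoint coercive operators, c₊ > 0, and D : H → V the B-weighted pseudoinverse of R (i.e. R(D y) = y for all y and D y minimizes ‖·‖_B over R⁻¹({y})). Then the following are equivalent: (i) (A R v, R v)_H ≤ c₊ (B v, v)_V for every v ∈ V; (ii) (A u, u)_H ≤ c₊ (B (D u), D u)_V for every u ∈ H. -/
open RealInnerProductSpace

/-- Let `R : V → H` be a surjective bounded linear operator between real
Hilbert spaces, `A : H → H` and `B : V → V` bounded self-adjoint coercive operators,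
`c₊ > 0`, and `D : H → V` the `B`-weighted pseudoinverse of `R` (a bounded linear right
inverse of `R` such that `D y` minimizes `‖·‖_B` over `R⁻¹({y})`). Then the continuity
condition (i): `⟪A (R v), R v⟫ ≤ c₊ ⟪B v, v⟫` for every `v ∈ V`, is equivalent to (ii):
`⟪A u, u⟫ ≤ c₊ ⟪B (D u), D u⟫` for every `u ∈ H`. -/
theorem statement7
    {V H : Type*} [NormedAddCommGroup V] [InnerProductSpace ℝ V] [CompleteSpace V]
    [NormedAddCommGroup H] [InnerProductSpace ℝ H] [CompleteSpace H]
    (R : V →L[ℝ] H) (hR : Function.Surjective R)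
    (A : H →L[ℝ] H)
    (hAsa : ∀ u w : H, ⟪A u, w⟫ = ⟪u, A w⟫)
    (cA : ℝ) (hcA : 0 < cA) (hAcoer : ∀ u : H, cA * ‖u‖ ^ 2 ≤ ⟪A u, u⟫)
    (B : V →L[ℝ] V)
    (hBsa : ∀ x z : V, ⟪B x, z⟫ = ⟪x, B z⟫)
    (cB : ℝ) (hcB : 0 < cB) (hBcoer : ∀ x : V, cB * ‖x‖ ^ 2 ≤ ⟪B x, x⟫)
    (D : H →L[ℝ] V)
    (hD1 : ∀ y : H, R (D y) = y)
    (hDmin : ∀ y : H, ∀ x : V, R x = y →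
      Real.sqrt ⟪B (D y), D y⟫ ≤ Real.sqrt ⟪B x, x⟫)
    (cp : ℝ) (hcp : 0 < cp) :
    (∀ v : V, ⟪A (R v), R v⟫ ≤ cp * ⟪B v, v⟫) ↔
    (∀ u : H, ⟪A u, u⟫ ≤ cp * ⟪B (D u), D u⟫) := by
  have hBnn : ∀ x : V, (0:ℝ) ≤ ⟪B x, x⟫ := fun x =>
    le_trans (by positivity) (hBcoer x)
  constructor
  · intro h u
    have := h (D u)
    rwa [hD1 u] at this
  · intro h v
    have h1 := h (R v)
    have h2 := hDmin (R v) v rfl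
    have h3 : ⟪B (D (R v)), D (R v)⟫ ≤ ⟪B v, v⟫ := by
      nlinarith [Real.sq_sqrt (hBnn (D (R v))), Real.sq_sqrt (hBnn v),
        Real.sqrt_nonneg (⟪B (D (R v)), D (R v)⟫ : ℝ), Real.sqrt_nonneg (⟪B v, v⟫ : ℝ)]
    calc ⟪A (R v), R v⟫ ≤ cp * ⟪B (D (R v)), D (R v)⟫ := h1
      _ ≤ cp * ⟪B v, v⟫ := by nlinarith
end

section
/- Let R : V → H be a surjective bounded linear operator between real Hilbert spaces, A : H → H and B : V → V bounded self-adjoint coercive operators with B bijective with bounded inverse B⁻¹, and D : H → V the B-weighted pseudoinverse of R. Set S := D* ∘ B ∘ D : H → H and T := R ∘ B⁻¹ ∘ R* ∘ A : H → H. Then T is self-adjoint with respect to both induced scalar products (·,·)_S and (·,·)_A, i.e. (S T u, v)_H = (S u, T v)_H and (A T u, v)_H = (A u, T v)_H for all u, v ∈ H. -/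
open RealInnerProductSpace

/-! The weighted pseudoinverse solves the normal equations `D* B D (R B⁻¹ R*) = id`, so
`S T = A`; hence `S T` is symmetric, which is what self-adjointness of `T` for `(·,·)_S` means.
For `(·,·)_A` one needs `A T = (R* A)* B⁻¹ (R* A)` symmetric, a congruence of the symmetric
operator `B⁻¹`. -/

open ContinuousLinearMap

section General

variable {𝕜 E F : Type*} [RCLike 𝕜]
  [NormedAddCommGroup E] [InnerProductSpace 𝕜 E] [NormedAddCommGroup F] [InnerProductSpace 𝕜 F]

theorem LinearMap.IsSymmetric.of_rightInverse {f g : E →ₗ[𝕜] E} (hf : f.IsSymmetric)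
    (hfg : Function.RightInverse g f) : g.IsSymmetric := fun x y => by
  simpa only [hfg x, hfg y] using (hf (g x) (g y)).symm

theorem IsSelfAdjoint.inner_map_map_eq_of_comp [CompleteSpace E] {M T : E →L[𝕜] E}
    (hM : IsSelfAdjoint M) (hMT : IsSelfAdjoint (M ∘L T)) (u w : E) :
    inner 𝕜 (M (T u)) w = inner 𝕜 (M u) (T w) :=
  (hMT.isSymmetric u w).trans (hM.isSymmetric u (T w)).symm

theorem inner_rightInverse_apply_eq_of_mem_orthogonal_ker {R : E →ₗ[𝕜] F} {D : F → E}
    (hRD : Function.RightInverse D R) {v : E} (hv : v ∈ (LinearMap.ker R)ᗮ) (x : E) :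
    inner 𝕜 (D (R x)) v = inner 𝕜 x v := by
  have hker : D (R x) - x ∈ LinearMap.ker R := by
    rw [LinearMap.mem_ker, map_sub, hRD, sub_self]
  rw [← sub_eq_zero, ← inner_sub_left]
  exact Submodule.inner_right_of_mem_orthogonal hker hv

theorem adjoint_apply_weight_apply_pseudoinverse_apply [CompleteSpace E] [CompleteSpace F]
    {R : E →L[𝕜] F} {B B' : E →L[𝕜] E} {D : F →L[𝕜] E}
    (hB : (B : E →ₗ[𝕜] E).IsSymmetric) (hBB' : Function.RightInverse B' B)
    (hRD : Function.RightInverse D R) (hBD : ∀ y, B (D y) ∈ (LinearMap.ker (R : E →ₗ[𝕜] F))ᗮ)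
    (y : F) : adjoint D (B (D (R (B' (adjoint R y))))) = y := by
  refine ext_inner_right 𝕜 fun w => ?_
  set x := B' (adjoint R y)
  calc inner 𝕜 (adjoint D (B (D (R x)))) w = inner 𝕜 (D (R x)) (B (D w)) := by
        rw [adjoint_inner_left]
        exact hB _ _
    _ = inner 𝕜 x (B (D w)) := inner_rightInverse_apply_eq_of_mem_orthogonal_ker hRD (hBD w) x
    _ = inner 𝕜 (B x) (D w) := (hB x (D w)).symm
    _ = inner 𝕜 (adjoint R y) (D w) := by rw [hBB']
    _ = inner 𝕜 y w := by rw [adjoint_inner_left, hRD]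

end General

theorem statement8_general
    {V H : Type*} [NormedAddCommGroup V] [InnerProductSpace ℝ V] [CompleteSpace V]
    [NormedAddCommGroup H] [InnerProductSpace ℝ H] [CompleteSpace H]
    (R : V →L[ℝ] H)
    (A : H →L[ℝ] H)
    (hAsa : ∀ u w : H, ⟪A u, w⟫ = ⟪u, A w⟫)
    (B : V →L[ℝ] V)
    (hBsa : ∀ x z : V, ⟪B x, z⟫ = ⟪x, B z⟫)
    (B' : V →L[ℝ] V) (hB'r : ∀ x : V, B (B' x) = x)
    (D : H →L[ℝ] V)
    (hD1 : ∀ y : H, R (D y) = y)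
    (hD2 : ∀ y : H, ∀ k ∈ LinearMap.ker (R : V →ₗ[ℝ] H), ⟪B (D y), k⟫ = 0)
    (S : H →L[ℝ] H) (hS : S = (ContinuousLinearMap.adjoint D).comp (B.comp D))
    (T : H →L[ℝ] H) (hT : T = R.comp (B'.comp ((ContinuousLinearMap.adjoint R).comp A))) :
    (∀ u w : H, ⟪S (T u), w⟫ = ⟪S u, T w⟫) ∧
    (∀ u w : H, ⟪A (T u), w⟫ = ⟪A u, T w⟫) := by
  have hA : IsSelfAdjoint A := isSelfAdjoint_iff_isSymmetric.2 hAsa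
  have hB : IsSelfAdjoint B := isSelfAdjoint_iff_isSymmetric.2 hBsa
  have hB' : IsSelfAdjoint B' :=
    isSelfAdjoint_iff_isSymmetric.2 (LinearMap.IsSymmetric.of_rightInverse hBsa hB'r)
  have hST : S ∘L T = A := by
    ext u
    simpa [hS, hT] using adjoint_apply_weight_apply_pseudoinverse_apply hBsa hB'r hD1
      (fun y => (Submodule.mem_orthogonal' _ _).2 (hD2 y)) (A u)
  have hAT : A ∘L T = adjoint (adjoint R ∘L A) ∘L B' ∘L (adjoint R ∘L A) := by
    rw [adjoint_comp, adjoint_adjoint, hA.adjoint_eq, hT]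
    rfl
  refine ⟨?_, hA.inner_map_map_eq_of_comp (hAT ▸ hB'.adjoint_conj _)⟩
  exact (hS ▸ hB.adjoint_conj D).inner_map_map_eq_of_comp (hST ▸ hA)

/-- With `R : V → H` surjective bounded linear, `A : H → H` and `B : V → V`
bounded self-adjoint coercive, `B'` the bounded inverse of `B`, and `D : H → V` the
`B`-weighted pseudoinverse of `R`, set `S := D* ∘ B ∘ D` and `T := R ∘ B' ∘ R* ∘ A`.
Then `T` is self-adjoint with respect to both scalar products `(·,·)_S` and `(·,·)_A`:
`⟪S (T u), w⟫ = ⟪S u, T w⟫` and `⟪A (T u), w⟫ = ⟪A u, T w⟫` for all `u, w ∈ H`. -/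
theorem statement8
    {V H : Type*} [NormedAddCommGroup V] [InnerProductSpace ℝ V] [CompleteSpace V]
    [NormedAddCommGroup H] [InnerProductSpace ℝ H] [CompleteSpace H]
    (R : V →L[ℝ] H) (hR : Function.Surjective R)
    (A : H →L[ℝ] H)
    (hAsa : ∀ u w : H, ⟪A u, w⟫ = ⟪u, A w⟫)
    (cA : ℝ) (hcA : 0 < cA) (hAcoer : ∀ u : H, cA * ‖u‖ ^ 2 ≤ ⟪A u, u⟫)
    (B : V →L[ℝ] V)
    (hBsa : ∀ x z : V, ⟪B x, z⟫ = ⟪x, B z⟫)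
    (cB : ℝ) (hcB : 0 < cB) (hBcoer : ∀ x : V, cB * ‖x‖ ^ 2 ≤ ⟪B x, x⟫)
    (B' : V →L[ℝ] V) (hB'l : ∀ x : V, B' (B x) = x) (hB'r : ∀ x : V, B (B' x) = x)
    (D : H →L[ℝ] V)
    (hD1 : ∀ y : H, R (D y) = y)
    (hD2 : ∀ y : H, ∀ k ∈ LinearMap.ker (R : V →ₗ[ℝ] H), ⟪B (D y), k⟫ = 0)
    (S : H →L[ℝ] H) (hS : S = (ContinuousLinearMap.adjoint D).comp (B.comp D))
    (T : H →L[ℝ] H) (hT : T = R.comp (B'.comp ((ContinuousLinearMap.adjoint R).comp A))) :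
    (∀ u w : H, ⟪S (T u), w⟫ = ⟪S u, T w⟫) ∧
    (∀ u w : H, ⟪A (T u), w⟫ = ⟪A u, T w⟫) :=
  statement8_general R A hAsa B hBsa B' hB'r D hD1 hD2 S hS T hT
end

section
/- (Fictitious space lemma.) Let H and V be real Hilbert spaces with inner products (·,·)_H and (·,·)_V. Let A : H → H and B : V → V be bounded self-adjoint coercive operators, with B bijective with bounded inverse B⁻¹, inducing scalar products (u,v)_A := (A u, v)_H and (x,y)_B := (B x, y)_V. Suppose R : V → H is a surjective bounded linear operator and c₋, c₊ > 0 are constants such that: (i) for every u ∈ H there exists v ∈ V with R v = u and c₋ (v,v)_B ≤ (u,u)_A; (ii) (R v, R v)_A ≤ c₊ (v,v)_B for all v ∈ V. Then, with R* : H → V the Hilbert-space adjoint of R, the operator R B⁻¹ R* A : H → H satisfies c₋ (u,u)_A ≤ (R B⁻¹ R* A u, u)_A ≤ c₊ (u,u)_A for all u ∈ H. -/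
open RealInnerProductSpace

lemma cs_aux {E : Type*} [NormedAddCommGroup E] [InnerProductSpace ℝ E]
    (T : E →L[ℝ] E) (hsym : ∀ x y : E, ⟪T x, y⟫ = ⟪x, T y⟫)
    (hpos : ∀ x : E, 0 ≤ ⟪T x, x⟫) (x y : E) :
    ⟪T x, y⟫ ^ 2 ≤ ⟪T x, x⟫ * ⟪T y, y⟫ := by
  have h : ∀ t : ℝ, 0 ≤ ⟪T y, y⟫ * (t * t) + (2 * ⟪T x, y⟫) * t + ⟪T x, x⟫ := by
    intro t
    have h0 := hpos (x + t • y)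
    have hyx : ⟪T y, x⟫ = ⟪T x, y⟫ := by
      rw [hsym, real_inner_comm]
    simp only [map_add, map_smul, inner_add_left, inner_add_right,
      real_inner_smul_left, real_inner_smul_right, hyx] at h0
    nlinarith [h0]
  have hd := discrim_le_zero h
  rw [discrim] at hd
  nlinarith [hd]

/-- Fictitious space lemma: Let `H`, `V` be real Hilbert spaces,
`A : H → H` and `B : V → V` bounded self-adjoint coercive operators, `B'` the bounded
inverse of `B`, `R : V → H` a surjective bounded linear operator, and `c₋, c₊ > 0` such
that (i) every `u ∈ H` has a preimage `v` under `R` with `c₋ ⟪B v, v⟫ ≤ ⟪A u, u⟫`, and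
(ii) `⟪A (R v), R v⟫ ≤ c₊ ⟪B v, v⟫` for all `v ∈ V`. Then the preconditioned operator
`R B⁻¹ R* A` satisfies `c₋ (u,u)_A ≤ (R B⁻¹ R* A u, u)_A ≤ c₊ (u,u)_A` for all `u ∈ H`. -/
theorem statement9
    {V H : Type*} [NormedAddCommGroup V] [InnerProductSpace ℝ V] [CompleteSpace V]
    [NormedAddCommGroup H] [InnerProductSpace ℝ H] [CompleteSpace H]
    (A : H →L[ℝ] H)
    (hAsa : ∀ u w : H, ⟪A u, w⟫ = ⟪u, A w⟫)
    (cA : ℝ) (hcA : 0 < cA) (hAcoer : ∀ u : H, cA * ‖u‖ ^ 2 ≤ ⟪A u, u⟫)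
    (B : V →L[ℝ] V)
    (hBsa : ∀ x z : V, ⟪B x, z⟫ = ⟪x, B z⟫)
    (cB : ℝ) (hcB : 0 < cB) (hBcoer : ∀ x : V, cB * ‖x‖ ^ 2 ≤ ⟪B x, x⟫)
    (B' : V →L[ℝ] V) (hB'l : ∀ x : V, B' (B x) = x) (hB'r : ∀ x : V, B (B' x) = x)
    (R : V →L[ℝ] H) (hR : Function.Surjective R)
    (cm cp : ℝ) (hcm : 0 < cm) (hcp : 0 < cp)
    (hi : ∀ u : H, ∃ v : V, R v = u ∧ cm * ⟪B v, v⟫ ≤ ⟪A u, u⟫)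
    (hii : ∀ v : V, ⟪A (R v), R v⟫ ≤ cp * ⟪B v, v⟫) :
    ∀ u : H,
      cm * ⟪A u, u⟫ ≤ ⟪A (R (B' (ContinuousLinearMap.adjoint R (A u)))), u⟫ ∧
      ⟪A (R (B' (ContinuousLinearMap.adjoint R (A u)))), u⟫ ≤ cp * ⟪A u, u⟫ := by
  intro u
  set w : V := B' (ContinuousLinearMap.adjoint R (A u)) with hw
  have hApos : ∀ z : H, 0 ≤ ⟪A z, z⟫ := fun z =>
    le_trans (by positivity) (hAcoer z)
  have hBpos : ∀ z : V, 0 ≤ ⟪B z, z⟫ := fun z =>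
    le_trans (by positivity) (hBcoer z)
  have hBw : B w = ContinuousLinearMap.adjoint R (A u) := hB'r _
  have hM : ⟪A (R w), u⟫ = ⟪B w, w⟫ := by
    rw [hAsa, real_inner_comm, ← ContinuousLinearMap.adjoint_inner_left, ← hBw,
      real_inner_comm]
  set m : ℝ := ⟪B w, w⟫ with hm
  set q : ℝ := ⟪A u, u⟫ with hq
  have hm0 : 0 ≤ m := hBpos w
  have hq0 : 0 ≤ q := hApos u
  rw [hM]
  constructor
  · -- lower bound
    obtain ⟨v, hv, hvle⟩ := hi u
    have hvle' : cm * ⟪B v, v⟫ ≤ q := hvle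
    have h1 : q = ⟪B w, v⟫ := by
      rw [hBw, ContinuousLinearMap.adjoint_inner_left, hv]
    have h2 : q ^ 2 ≤ m * ⟪B v, v⟫ := by
      rw [h1]; exact cs_aux B hBsa hBpos w v
    have key : cm * q * q ≤ m * q := by
      nlinarith [mul_le_mul_of_nonneg_left h2 hcm.le,
        mul_le_mul_of_nonneg_left hvle' hm0]
    rcases eq_or_lt_of_le hq0 with h | h
    · simp [← h]
      exact hm0
    · exact le_of_mul_le_mul_right key h
  · -- upper bound
    have h2 : m ^ 2 ≤ ⟪A (R w), R w⟫ * q := by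
      rw [← hM]; exact cs_aux A hAsa hApos (R w) u
    have h3 : ⟪A (R w), R w⟫ ≤ cp * m := hii w
    have key : m * m ≤ (cp * q) * m := by
      nlinarith [h2, mul_le_mul_of_nonneg_right h3 hq0]
    rcases eq_or_lt_of_le hm0 with h | h
    · rw [← h]; positivity
    · exact le_of_mul_le_mul_right key h
end

section
/- Let H and V be real Hilbert spaces, A : H → H and B : V → V bounded self-adjoint coercive operators with B bijective with bounded inverse B⁻¹, R : V → H a surjective bounded linear operator with adjoint R*, and D : H → V the B-weighted pseudoinverse of R. Then the extremal Rayleigh quotients of the preconditioned operator in the A-inner product are given by the pseudoinverse: inf over u ∈ H, u ≠ 0, of (R B⁻¹ R* A u, u)_A / (u,u)_A equals inf over u ≠ 0 of (A u, u)_H / (B (D u), D u)_V, and sup over u ≠ 0 of (R B⁻¹ R* A u, u)_A / (u,u)_A equals sup over u ≠ 0 of (A u, u)_H / (B (D u), D u)_V. In particular, the optimal constants c₋, c₊ in the fictitious space lemma give optimal bounds in its spectral estimate. -/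
/-!
Write `w = B⁻¹ R* A u`. Then `(R B⁻¹ R* A u, u)_A = (B w, w)_V` and `(B w, x)_V = (A u, R x)_H`
for every `x ∈ V`; in particular `w` is `B`-orthogonal to `ker R`, so `D (R w) = w`, and
`(B w, D u)_V = (A u, u)_H`. Each comparison between the two Rayleigh quotients is then one
Cauchy–Schwarz inequality, for `(·,·)_B` or for `(·,·)_A`:
* `q₂(u) ≤ q₁(u)` by Cauchy–Schwarz for `w` and `D u`;
* `q₁(u) ≤ q₂(R w)`, since `D (R w) = w`;
* `q₁(v) ≤ q₂(u)` for the `v` with `R* A v = B D u`, which exists because `B D u ⊥ ker R`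
  and `A` is invertible by Lax–Milgram; then `B⁻¹ R* A v = D u`.
So the two sets of quotients are mutually cofinal and coinitial.
-/

open RealInnerProductSpace ContinuousLinearMap InnerProductSpace

section Symmetric

variable {E : Type*} [NormedAddCommGroup E] [InnerProductSpace ℝ E]

theorem inner_map_sq_le_of_isSymmetric {T : E →L[ℝ] E} (hT : (T : E →ₗ[ℝ] E).IsSymmetric)
    (hT₀ : ∀ x, 0 ≤ ⟪T x, x⟫) (x y : E) : ⟪T x, y⟫ ^ 2 ≤ ⟪T x, x⟫ * ⟪T y, y⟫ := by
  have hyx : ⟪T y, x⟫ = ⟪T x, y⟫ := (hT y x).trans (real_inner_comm _ _)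
  have := LinearMap.BilinForm.apply_mul_apply_le_of_forall_zero_le
    (innerₗ E ∘ₗ (T : E →ₗ[ℝ] E)) hT₀ x y
  simp only [LinearMap.comp_apply, innerₗ_apply_apply, coe_coe, hyx] at this
  rwa [← sq] at this

theorem inner_map_div_le_of_isSymmetric {T : E →L[ℝ] E} (hT : (T : E →ₗ[ℝ] E).IsSymmetric)
    (hT₀ : ∀ x, 0 ≤ ⟪T x, x⟫) {x y : E} (hx : 0 < ⟪T x, x⟫) (hxy : 0 < ⟪T x, y⟫) :
    ⟪T x, y⟫ / ⟪T x, x⟫ ≤ ⟪T y, y⟫ / ⟪T x, y⟫ := by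
  rw [div_le_div_iff₀ hx hxy, ← sq]
  exact (inner_map_sq_le_of_isSymmetric hT hT₀ x y).trans_eq (mul_comm _ _)

end Symmetric

section Coercive

variable {E : Type*} [NormedAddCommGroup E] [InnerProductSpace ℝ E] {c : ℝ}

theorem inner_map_self_nonneg_of_coercive {T : E → E} (hc : 0 ≤ c)
    (hT : ∀ x, c * ‖x‖ ^ 2 ≤ ⟪T x, x⟫) (x : E) : 0 ≤ ⟪T x, x⟫ :=
  (by positivity : 0 ≤ c * ‖x‖ ^ 2).trans (hT x)

theorem inner_map_self_pos_of_coercive {T : E → E} (hc : 0 < c)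
    (hT : ∀ x, c * ‖x‖ ^ 2 ≤ ⟪T x, x⟫) {x : E} (hx : x ≠ 0) : 0 < ⟪T x, x⟫ :=
  (by have := norm_pos_iff.mpr hx; positivity : 0 < c * ‖x‖ ^ 2).trans_le (hT x)

theorem surjective_of_coercive [CompleteSpace E] {T : E →L[ℝ] E} (hc : 0 < c)
    (hT : ∀ x, c * ‖x‖ ^ 2 ≤ ⟪T x, x⟫) : Function.Surjective T := by
  have hcoer : IsCoercive ((innerSL ℝ).comp T : E →L[ℝ] E →L[ℝ] ℝ) :=
    ⟨c, hc, fun x => by simpa [sq, mul_assoc] using hT x⟩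
  have hT_eq : continuousLinearMapOfBilin ((innerSL ℝ).comp T) = T :=
    ext fun x => (unique_continuousLinearMapOfBilin _ fun y => by simp).symm
  rw [← hT_eq]
  exact LinearMap.range_eq_top.mp hcoer.range_eq_top

end Coercive

section Pseudoinverse

variable {V H : Type*} [NormedAddCommGroup V] [InnerProductSpace ℝ V]
  [NormedAddCommGroup H] [InnerProductSpace ℝ H]

theorem eq_of_map_eq_of_inner_ker_eq_zero {B : V →ₗ[ℝ] V}
    (hB : ∀ x, x ≠ 0 → 0 < ⟪B x, x⟫) {R : V →ₗ[ℝ] H} {v v' : V} (h : R v = R v')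
    (hv : ∀ k ∈ LinearMap.ker R, ⟪B v, k⟫ = 0) (hv' : ∀ k ∈ LinearMap.ker R, ⟪B v', k⟫ = 0) :
    v = v' := by
  have hk : v - v' ∈ LinearMap.ker R := by simp [h]
  by_contra hne
  have := hB _ (sub_ne_zero.mpr hne)
  rw [map_sub, inner_sub_left, hv _ hk, hv' _ hk, sub_self] at this
  exact this.false

variable [CompleteSpace V] [CompleteSpace H] {R : V →L[ℝ] H}

theorem eq_zero_of_adjoint_apply_eq_zero {D : H → V} (hD : ∀ y, R (D y) = y) {y : H}
    (hy : adjoint R y = 0) : y = 0 := by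
  have : ⟪y, R (D y)⟫ = 0 := by rw [← adjoint_inner_left, hy, inner_zero_left]
  rwa [hD, inner_self_eq_zero] at this

theorem exists_adjoint_apply_eq_of_inner_ker_eq_zero {D : H →L[ℝ] V} (hD : ∀ y, R (D y) = y)
    {x : V} (hx : ∀ k ∈ LinearMap.ker (R : V →ₗ[ℝ] H), ⟪x, k⟫ = 0) : ∃ g, adjoint R g = x := by
  refine ⟨(toDual ℝ H).symm ((innerSL ℝ x).comp D), ext_inner_right ℝ fun z => ?_⟩
  have hk : D (R z) - z ∈ LinearMap.ker (R : V →ₗ[ℝ] H) := by simp [hD]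
  rw [adjoint_inner_left, toDual_symm_apply, comp_apply, innerSL_apply_apply,
    ← sub_eq_zero, ← inner_sub_right, hx _ hk]

end Pseudoinverse

section RayleighQuotients

variable {V H : Type*} [NormedAddCommGroup V] [InnerProductSpace ℝ V] [CompleteSpace V]
  [NormedAddCommGroup H] [InnerProductSpace ℝ H] [CompleteSpace H]

/-- `(R B⁻¹ R* A u, u)_A / (u, u)_A`, where `B'` plays the role of `B⁻¹`. -/
noncomputable def preconditionedRayleigh (A : H →L[ℝ] H) (B' : V →L[ℝ] V) (R : V →L[ℝ] H)
    (u : H) : ℝ :=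
  ⟪A (R (B' (adjoint R (A u)))), u⟫ / ⟪A u, u⟫

noncomputable def pseudoinverseRayleigh (A : H →L[ℝ] H) (B : V →L[ℝ] V) (D : H →L[ℝ] V)
    (u : H) : ℝ :=
  ⟪A u, u⟫ / ⟪B (D u), D u⟫

variable {A : H →L[ℝ] H} {B B' : V →L[ℝ] V} {R : V →L[ℝ] H} {D : H →L[ℝ] V}

theorem inner_preconditioner_apply (hB' : ∀ x, B (B' x) = x) (y : H) (x : V) :
    ⟪B (B' (adjoint R y)), x⟫ = ⟪y, R x⟫ := by
  rw [hB', adjoint_inner_left]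

theorem inner_preconditioned_apply_self (hA : (A : H →ₗ[ℝ] H).IsSymmetric)
    (hB' : ∀ x, B (B' x) = x) (u : H) :
    ⟪A (R (B' (adjoint R (A u)))), u⟫ =
      ⟪B (B' (adjoint R (A u))), B' (adjoint R (A u))⟫ := by
  rw [inner_preconditioner_apply hB']
  exact (hA _ _).trans (real_inner_comm _ _)

theorem pseudoinverseRayleigh_le_preconditionedRayleigh (hA : (A : H →ₗ[ℝ] H).IsSymmetric)
    (hB : (B : V →ₗ[ℝ] V).IsSymmetric) (hB₀ : ∀ x, 0 ≤ ⟪B x, x⟫) (hB' : ∀ x, B (B' x) = x)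
    (hD : ∀ y, R (D y) = y) {u : H} (hu : 0 < ⟪A u, u⟫) (hDu : 0 < ⟪B (D u), D u⟫) :
    pseudoinverseRayleigh A B D u ≤ preconditionedRayleigh A B' R u := by
  set w := B' (adjoint R (A u))
  have hw : ⟪B (D u), w⟫ = ⟪A u, u⟫ :=
    calc ⟪B (D u), w⟫ = ⟪B w, D u⟫ := (hB _ _).trans (real_inner_comm _ _)
      _ = ⟪A u, u⟫ := by rw [inner_preconditioner_apply hB', hD]
  have key := inner_map_div_le_of_isSymmetric hB hB₀ hDu (hw ▸ hu)
  rw [hw] at key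
  rwa [preconditionedRayleigh, inner_preconditioned_apply_self hA hB']

theorem exists_pseudoinverseRayleigh_ge_preconditionedRayleigh
    (hA : (A : H →ₗ[ℝ] H).IsSymmetric) (hA₀ : ∀ u, 0 ≤ ⟪A u, u⟫)
    (hB : ∀ x, x ≠ 0 → 0 < ⟪B x, x⟫) (hB' : ∀ x, B (B' x) = x) (hD₁ : ∀ y, R (D y) = y)
    (hD₂ : ∀ y, ∀ k ∈ LinearMap.ker (R : V →ₗ[ℝ] H), ⟪B (D y), k⟫ = 0)
    {u : H} (hu : 0 < ⟪A u, u⟫) :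
    ∃ v, v ≠ 0 ∧ preconditionedRayleigh A B' R u ≤ pseudoinverseRayleigh A B D v := by
  set w := B' (adjoint R (A u)) with hw_def
  set v := R w
  have hw : w ≠ 0 := by
    intro h
    have hAu : A u = 0 := eq_zero_of_adjoint_apply_eq_zero hD₁ <| by
      rw [← hB' (adjoint R (A u)), ← hw_def, h, map_zero]
    simp [hAu] at hu
  have hDv : D v = w := by
    refine eq_of_map_eq_of_inner_ker_eq_zero hB (hD₁ v) (hD₂ v) fun k hk => ?_
    change ⟪B w, k⟫ = 0
    rw [inner_preconditioner_apply hB', show R k = 0 from hk, inner_zero_right]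
  have huv : ⟪A u, v⟫ = ⟪B w, w⟫ := (inner_preconditioner_apply hB' _ _).symm
  have hvu : ⟪A v, u⟫ = ⟪A u, v⟫ := (hA _ _).trans (real_inner_comm _ _)
  have hpos : 0 < ⟪A u, v⟫ := huv ▸ hB w hw
  refine ⟨v, fun hv => by simp [hv] at hpos, ?_⟩
  show ⟪A v, u⟫ / ⟪A u, u⟫ ≤ ⟪A v, v⟫ / ⟪B (D v), D v⟫
  rw [hvu, hDv, ← huv]
  exact inner_map_div_le_of_isSymmetric hA hA₀ hu hpos

theorem exists_preconditionedRayleigh_le_pseudoinverseRayleigh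
    (hA : (A : H →ₗ[ℝ] H).IsSymmetric) (hA₀ : ∀ u, 0 ≤ ⟪A u, u⟫)
    (hApos : ∀ u, u ≠ 0 → 0 < ⟪A u, u⟫) (hA_surj : Function.Surjective A)
    (hB'l : ∀ x, B' (B x) = x) (hB'r : ∀ x, B (B' x) = x) (hD₁ : ∀ y, R (D y) = y)
    (hD₂ : ∀ y, ∀ k ∈ LinearMap.ker (R : V →ₗ[ℝ] H), ⟪B (D y), k⟫ = 0)
    {u : H} (hDu : 0 < ⟪B (D u), D u⟫) :
    ∃ v, v ≠ 0 ∧ preconditionedRayleigh A B' R v ≤ pseudoinverseRayleigh A B D u := by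
  obtain ⟨g, hg⟩ := exists_adjoint_apply_eq_of_inner_ker_eq_zero hD₁ (hD₂ u)
  obtain ⟨v, rfl⟩ := hA_surj g
  have hw : B' (adjoint R (A v)) = D u := by rw [hg, hB'l]
  have hvu : ⟪A v, u⟫ = ⟪B (D u), D u⟫ :=
    calc ⟪A v, u⟫ = ⟪A v, R (D u)⟫ := by rw [hD₁]
      _ = ⟪B (D u), D u⟫ := by rw [← inner_preconditioner_apply hB'r, hw]
  have hpos : 0 < ⟪A v, u⟫ := hvu ▸ hDu
  have hv : v ≠ 0 := by
    rintro rfl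
    simp at hpos
  refine ⟨v, hv, ?_⟩
  rw [preconditionedRayleigh, pseudoinverseRayleigh, inner_preconditioned_apply_self hA hB'r, hw,
    ← hvu]
  exact inner_map_div_le_of_isSymmetric hA hA₀ (hApos v hv) hpos

end RayleighQuotients

theorem statement10_general
    {V H : Type*} [NormedAddCommGroup V] [InnerProductSpace ℝ V] [CompleteSpace V]
    [NormedAddCommGroup H] [InnerProductSpace ℝ H] [CompleteSpace H]
    (A : H →L[ℝ] H)
    (hAsa : ∀ u w : H, ⟪A u, w⟫ = ⟪u, A w⟫)
    (cA : ℝ) (hcA : 0 < cA) (hAcoer : ∀ u : H, cA * ‖u‖ ^ 2 ≤ ⟪A u, u⟫)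
    (B : V →L[ℝ] V)
    (hBsa : ∀ x z : V, ⟪B x, z⟫ = ⟪x, B z⟫)
    (cB : ℝ) (hcB : 0 < cB) (hBcoer : ∀ x : V, cB * ‖x‖ ^ 2 ≤ ⟪B x, x⟫)
    (B' : V →L[ℝ] V) (hB'l : ∀ x : V, B' (B x) = x) (hB'r : ∀ x : V, B (B' x) = x)
    (R : V →L[ℝ] H)
    (D : H →L[ℝ] V)
    (hD1 : ∀ y : H, R (D y) = y)
    (hD2 : ∀ y : H, ∀ k ∈ LinearMap.ker (R : V →ₗ[ℝ] H), ⟪B (D y), k⟫ = 0) :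
    sInf {t : ℝ | ∃ u : H, u ≠ 0 ∧
        t = ⟪A (R (B' (ContinuousLinearMap.adjoint R (A u)))), u⟫ / ⟪A u, u⟫} =
      sInf {t : ℝ | ∃ u : H, u ≠ 0 ∧ t = ⟪A u, u⟫ / ⟪B (D u), D u⟫} ∧
    sSup {t : ℝ | ∃ u : H, u ≠ 0 ∧
        t = ⟪A (R (B' (ContinuousLinearMap.adjoint R (A u)))), u⟫ / ⟪A u, u⟫} =
      sSup {t : ℝ | ∃ u : H, u ≠ 0 ∧ t = ⟪A u, u⟫ / ⟪B (D u), D u⟫} := by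
  have hApos : ∀ u, u ≠ 0 → 0 < ⟪A u, u⟫ := fun _ => inner_map_self_pos_of_coercive hcA hAcoer
  have hA₀ := inner_map_self_nonneg_of_coercive hcA.le hAcoer
  have hBpos : ∀ x, x ≠ 0 → 0 < ⟪B x, x⟫ := fun _ => inner_map_self_pos_of_coercive hcB hBcoer
  have hB₀ := inner_map_self_nonneg_of_coercive hcB.le hBcoer
  have hDpos : ∀ u, u ≠ 0 → 0 < ⟪B (D u), D u⟫ := fun u hu =>
    hBpos _ fun h => hu (by rw [← hD1 u, h, map_zero])
  have hle : ∀ u, u ≠ 0 → pseudoinverseRayleigh A B D u ≤ preconditionedRayleigh A B' R u :=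
    fun u hu => pseudoinverseRayleigh_le_preconditionedRayleigh hAsa hBsa hB₀ hB'r hD1
      (hApos u hu) (hDpos u hu)
  refine ⟨csInf_eq_csInf_of_forall_exists_le ?_ ?_, csSup_eq_csSup_of_forall_exists_le ?_ ?_⟩
  · rintro _ ⟨u, hu, rfl⟩
    exact ⟨_, ⟨u, hu, rfl⟩, hle u hu⟩
  · rintro _ ⟨u, hu, rfl⟩
    obtain ⟨v, hv, hvu⟩ := exists_preconditionedRayleigh_le_pseudoinverseRayleigh hAsa hA₀ hApos
      (surjective_of_coercive hcA hAcoer) hB'l hB'r hD1 hD2 (hDpos u hu)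
    exact ⟨_, ⟨v, hv, rfl⟩, hvu⟩
  · rintro _ ⟨u, hu, rfl⟩
    obtain ⟨v, hv, huv⟩ := exists_pseudoinverseRayleigh_ge_preconditionedRayleigh hAsa hA₀ hBpos
      hB'r hD1 hD2 (hApos u hu)
    exact ⟨_, ⟨v, hv, rfl⟩, huv⟩
  · rintro _ ⟨u, hu, rfl⟩
    exact ⟨_, ⟨u, hu, rfl⟩, hle u hu⟩

/-- With `H`, `V` real Hilbert spaces, `A : H → H` and `B : V → V` bounded
self-adjoint coercive operators, `B'` the bounded inverse of `B`, `R : V → H` surjective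
bounded linear, and `D : H → V` the `B`-weighted pseudoinverse of `R`, the extremal
Rayleigh quotients of the preconditioned operator `R B⁻¹ R* A` in the `A`-inner product
are expressed via the pseudoinverse:
`inf_{u ≠ 0} (R B⁻¹ R* A u, u)_A / (u,u)_A = inf_{u ≠ 0} (A u, u)_H / (B (D u), D u)_V`,
and similarly for the supremum; hence optimal constants in the fictitious space lemma
give optimal spectral bounds. -/
theorem statement10
    {V H : Type*} [NormedAddCommGroup V] [InnerProductSpace ℝ V] [CompleteSpace V]
    [NormedAddCommGroup H] [InnerProductSpace ℝ H] [CompleteSpace H]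
    (A : H →L[ℝ] H)
    (hAsa : ∀ u w : H, ⟪A u, w⟫ = ⟪u, A w⟫)
    (cA : ℝ) (hcA : 0 < cA) (hAcoer : ∀ u : H, cA * ‖u‖ ^ 2 ≤ ⟪A u, u⟫)
    (B : V →L[ℝ] V)
    (hBsa : ∀ x z : V, ⟪B x, z⟫ = ⟪x, B z⟫)
    (cB : ℝ) (hcB : 0 < cB) (hBcoer : ∀ x : V, cB * ‖x‖ ^ 2 ≤ ⟪B x, x⟫)
    (B' : V →L[ℝ] V) (hB'l : ∀ x : V, B' (B x) = x) (hB'r : ∀ x : V, B (B' x) = x)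
    (R : V →L[ℝ] H) (hR : Function.Surjective R)
    (D : H →L[ℝ] V)
    (hD1 : ∀ y : H, R (D y) = y)
    (hD2 : ∀ y : H, ∀ k ∈ LinearMap.ker (R : V →ₗ[ℝ] H), ⟪B (D y), k⟫ = 0) :
    sInf {t : ℝ | ∃ u : H, u ≠ 0 ∧
        t = ⟪A (R (B' (ContinuousLinearMap.adjoint R (A u)))), u⟫ / ⟪A u, u⟫} =
      sInf {t : ℝ | ∃ u : H, u ≠ 0 ∧ t = ⟪A u, u⟫ / ⟪B (D u), D u⟫} ∧
    sSup {t : ℝ | ∃ u : H, u ≠ 0 ∧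
        t = ⟪A (R (B' (ContinuousLinearMap.adjoint R (A u)))), u⟫ / ⟪A u, u⟫} =
      sSup {t : ℝ | ∃ u : H, u ≠ 0 ∧ t = ⟪A u, u⟫ / ⟪B (D u), D u⟫} :=
  statement10_general A hAsa cA hcA hAcoer B hBsa cB hcB hBcoer B' hB'l hB'r R D hD1 hD2
end
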